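/- Let X be a cocompact G-tree whose vertex and edge stabilizers are all infinite cyclic, and let e be an edge of X with endpoint w = ∂₁e. Suppose the one-edge splitting X̂ of G obtained by collapsing the components of X − Ge admits a nontrivial fold f: Y → X̂ at the image of the endpoint ∂₀e, with the stabilizer of the corresponding edge e' of Y a proper nontrivial subgroup of G_e. Then G_e = G_w, i.e. the edge stabilizer of e equals the stabilizer of its endpoint w. -/

import Mathlib

/-!
Let `γ` generate `G_b`. The fold is realised by an element `h` fixing `x` and carrying `y` to
`y''`; both `h` and a nontrivial element `γ ^ n` of `G_{e'}` lie in `G_e ≤ G_b = ⟨γ⟩`. Since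
`γ ^ n` fixes `x`, `γ` itself fixes a vertex `z` of `Y`, and `h = γ ^ k` fixes the geodesic
`[x, z]` pointwise. No edge of `[x, z]` maps onto the edge `q a q b` of `X̂`: the element `g`
carrying `e'` to it would lie in `G_e`, hence commute with `h`, and `h` would fix `y`. So the
geodesic from `f z` to `q b`, which `γ` fixes, passes through `q a`; thus `γ` fixes `q a`, hence
`a`, and `G_b ≤ G_e`.
-/

open SimpleGraph

section Defs

variable {G V : Type} [Group G]

/-- The action `ρ` preserves adjacency of the graph `X`. -/
def PreservesAdj (X : SimpleGraph V) (ρ : G →* Equiv.Perm V) : Prop :=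
  ∀ (g : G) (u v : V), X.Adj u v → X.Adj (ρ g u) (ρ g v)

/-- The action is without inversions: no element swaps the endpoints of an edge. -/
def NoInversions (X : SimpleGraph V) (ρ : G →* Equiv.Perm V) : Prop :=
  ∀ (g : G) (u v : V), X.Adj u v → ¬(ρ g u = v ∧ ρ g v = u)

/-- `X` together with `ρ` is a `G`-tree: a tree with a `G`-action by graph
automorphisms, without inversions. -/
def IsGTree (X : SimpleGraph V) (ρ : G →* Equiv.Perm V) : Prop :=
  X.IsTree ∧ PreservesAdj X ρ ∧ NoInversions X ρ

/-- The stabilizer of a vertex. -/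
def vStab (ρ : G →* Equiv.Perm V) (v : V) : Subgroup G :=
  (MulAction.stabilizer (Equiv.Perm V) v).comap ρ

/-- The stabilizer of an edge (for an action without inversions this is the
intersection of the stabilizers of the two endpoints). -/
def eStab (ρ : G →* Equiv.Perm V) (u v : V) : Subgroup G :=
  vStab ρ u ⊓ vStab ρ v

/-- An element is elliptic if it fixes a vertex; it is hyperbolic otherwise. -/
def Elliptic (ρ : G →* Equiv.Perm V) (γ : G) : Prop := ∃ v : V, ρ γ v = v

/-- A (bi-infinite) line in a graph. -/
def IsLine (X : SimpleGraph V) (L : Set V) : Prop :=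
  ∃ f : ℤ → V, Function.Injective f ∧ (∀ n : ℤ, X.Adj (f n) (f (n + 1))) ∧ L = Set.range f

/-- A set of vertices invariant under the element `γ`. -/
def InvariantSet (ρ : G →* Equiv.Perm V) (γ : G) (L : Set V) : Prop :=
  ⇑(ρ γ) '' L = L

/-- An axis for `γ` : a `γ`-invariant line. (A hyperbolic element has a unique one.) -/
def IsAxis (X : SimpleGraph V) (ρ : G →* Equiv.Perm V) (γ : G) (L : Set V) : Prop :=
  IsLine X L ∧ InvariantSet ρ γ L

/-- A subgroup is infinite cyclic. -/
def IsInfCyclic {G : Type} [Group G] (H : Subgroup G) : Prop := IsCyclic H ∧ Infinite H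

/-- A generalized Baumslag–Solitar tree: a `G`-tree all of whose vertex and edge
stabilizers are infinite cyclic. -/
def IsGBSTree (X : SimpleGraph V) (ρ : G →* Equiv.Perm V) : Prop :=
  IsGTree X ρ ∧ (∀ v : V, IsInfCyclic (vStab ρ v)) ∧
    (∀ u v : V, X.Adj u v → IsInfCyclic (eStab ρ u v))

/-- Two group elements are commensurable: some nonzero powers of them coincide. -/
def CommElts (γ δ : G) : Prop := ∃ m n : ℤ, m ≠ 0 ∧ n ≠ 0 ∧ γ ^ m = δ ^ n

/-- A generalized Baumslag–Solitar group: a group admitting a GBS tree. -/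
def IsGBSGroup (G : Type) [Group G] : Prop :=
  ∃ (V : Type) (X : SimpleGraph V) (ρ : G →* Equiv.Perm V), IsGBSTree X ρ

/-- A group is free: isomorphic to a free group on some set. -/
def IsFreeGrp (G : Type) [Group G] : Prop := ∃ ι : Type, Nonempty (G ≃* FreeGroup ι)

/-- The orbit of the edge `{a, b}` under the action. -/
def EdgeOrbit (ρ : G →* Equiv.Perm V) (a b : V) : Set (Sym2 V) :=
  {e | ∃ g : G, e = s(ρ g a, ρ g b)}

/-- A one-edge splitting of `G` over `C`: a `G`-tree with a single orbit of edges,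
no global fixed vertex, and an edge with stabilizer `C` (this is the Bass–Serre
tree of a nontrivial decomposition `A ∗_C B` or `A ∗_C`). -/
def OneEdgeSplitting (X : SimpleGraph V) (ρ : G →* Equiv.Perm V) (u v : V)
    (C : Subgroup G) : Prop :=
  IsGTree X ρ ∧ X.Adj u v ∧ eStab ρ u v = C ∧
  (¬ ∃ w : V, ∀ g : G, ρ g w = w) ∧
  (∀ u' v' : V, X.Adj u' v' → ∃ g : G, (ρ g u = u' ∧ ρ g v = v') ∨ (ρ g u = v' ∧ ρ g v = u'))

/-- `G` splits over the subgroup `C`. -/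
def SplitsOver (G : Type) [Group G] (C : Subgroup G) : Prop :=
  ∃ (W : Type) (T : SimpleGraph W) (σ : G →* Equiv.Perm W) (u v : W),
    OneEdgeSplitting T σ u v C

/-- Cayley graph of a group with respect to a set of generators. -/
def cayley (G : Type) [Group G] (S : Set G) : SimpleGraph G :=
  SimpleGraph.fromRel (fun a b => a⁻¹ * b ∈ S)

end Defs

/-- `T` has a single orbit of edges under the action `σ`. -/
def OneEdgeOrbit {G W : Type} [Group G] (T : SimpleGraph W) (σ : G →* Equiv.Perm W) : Prop :=
  ∃ u v : W, T.Adj u v ∧ ∀ x y : W, T.Adj x y →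
    ∃ g : G, (σ g u = x ∧ σ g v = y) ∨ (σ g u = y ∧ σ g v = x)

/-- `q : V → W` is the equivariant quotient map collapsing each connected component
of `X − G⬝{a,b}` to a vertex; the resulting tree `T` is the Bass–Serre tree of the
one-edge splitting of `G` associated to the edge `{a, b}`. -/
def IsCollapseMap {G V W : Type} [Group G] (X : SimpleGraph V) (ρ : G →* Equiv.Perm V)
    (a b : V) (T : SimpleGraph W) (σ : G →* Equiv.Perm W) (q : V → W) : Prop :=
  (∀ (g : G) (x : V), q (ρ g x) = σ g (q x)) ∧ Function.Surjective q ∧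
  T.Adj (q a) (q b) ∧
  (∀ x y : V, q x = q y ↔ ∃ p : X.Walk x y, ∀ e ∈ p.edges, e ∉ EdgeOrbit ρ a b) ∧
  (∀ u' v' : W, T.Adj u' v' →
    ∃ g : G, (σ g (q a) = u' ∧ σ g (q b) = v') ∨ (σ g (q a) = v' ∧ σ g (q b) = u'))

/-- `f : W' → W` is a nontrivial fold of `G`-trees: an equivariant surjective graph
morphism identifying two distinct edges with a common initial vertex. -/
def NontrivialFoldOnto {G W' W : Type} [Group G]
    (T' : SimpleGraph W') (σ' : G →* Equiv.Perm W')
    (T : SimpleGraph W) (σ : G →* Equiv.Perm W) (f : W' → W) : Prop :=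
  (∀ (g : G) (x : W'), f (σ' g x) = σ g (f x)) ∧ Function.Surjective f ∧
  (∀ x y : W', T'.Adj x y → T.Adj (f x) (f y)) ∧
  ∃ x y y' : W', T'.Adj x y ∧ T'.Adj x y' ∧ y ≠ y' ∧ f y = f y'

namespace SimpleGraph

variable {V : Type} {X : SimpleGraph V}

theorem Walk.dist_add_dist_le_length {u v c : V} (p : X.Walk u v) (hc : c ∈ p.support) :
    X.dist u c + X.dist c v ≤ p.length := by
  classical
  rw [← p.take_spec hc, Walk.length_append]
  exact add_le_add (X.dist_le _) (X.dist_le _)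

theorem IsAcyclic.mem_edges_of_adj (hX : X.IsAcyclic) {u v : V} (huv : X.Adj u v)
    (p : X.Walk u v) : s(u, v) ∈ p.edges :=
  isBridge_iff_forall_walk_mem_edges.mp (isAcyclic_iff_forall_adj_isBridge.mp hX huv) p

theorem IsTree.dist_eq_of_adj_of_sides (hX : X.IsTree) {c m w z : V} (hcm : X.Adj c m)
    (hw : X.dist w m = X.dist w c + 1) (hz : X.dist z c = X.dist z m + 1) :
    X.dist w z = X.dist w c + 1 + X.dist m z := by
  have hconn := hX.connected
  have hcm1 : X.dist c m = 1 := dist_eq_one_iff_adj.mpr hcm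
  refine le_antisymm ?_ ?_
  · calc X.dist w z ≤ X.dist w c + X.dist c z := hconn.dist_triangle
      _ ≤ X.dist w c + (X.dist c m + X.dist m z) := by gcongr; exact hconn.dist_triangle
      _ = X.dist w c + 1 + X.dist m z := by rw [hcm1]; ring
  obtain ⟨p₁, hp₁⟩ := hconn.exists_walk_length_eq_dist m z
  obtain ⟨p₂, hp₂⟩ := hconn.exists_walk_length_eq_dist z w
  obtain ⟨p₃, hp₃⟩ := hconn.exists_walk_length_eq_dist w c
  have hedge := hX.isAcyclic.mem_edges_of_adj hcm.symm (p₁.append (p₂.append p₃))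
  simp only [Walk.edges_append, List.mem_append] at hedge
  have hmc : X.dist m c = 1 := dist_comm.trans hcm1
  have hzm : X.dist z m = X.dist m z := dist_comm
  have hzw : X.dist z w = X.dist w z := dist_comm
  have hcw : X.dist c w = X.dist w c := dist_comm
  rcases hedge with h | h | h
  · have := p₁.dist_add_dist_le_length (p₁.snd_mem_support_of_mem_edges h)
    rw [dist_comm (u := c)] at this
    omega
  · have := p₂.dist_add_dist_le_length (p₂.snd_mem_support_of_mem_edges h)
    rw [dist_comm (u := c)] at this
    omega
  · have := p₃.dist_add_dist_le_length (p₃.fst_mem_support_of_mem_edges h)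
    omega

theorem Connected.exists_adj_dist_add_one_eq (hX : X.Connected) {u v : V} (hne : u ≠ v) :
    ∃ w, X.Adj u w ∧ X.dist w v + 1 = X.dist u v := by
  obtain ⟨p, hp⟩ := hX.exists_walk_length_eq_dist u v
  cases p with
  | nil => exact absurd rfl hne
  | @cons _ w _ huw q =>
    refine ⟨w, huw, le_antisymm ?_ ?_⟩
    · simpa [← hp] using X.dist_le q
    · calc X.dist u v ≤ X.dist u w + X.dist w v := hX.dist_triangle
        _ = X.dist w v + 1 := by rw [dist_eq_one_iff_adj.mpr huw, add_comm]

end SimpleGraph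

section Action

variable {G V : Type} [Group G] {X : SimpleGraph V} {ρ : G →* Equiv.Perm V}

theorem mem_vStab {v : V} {g : G} : g ∈ vStab ρ v ↔ ρ g v = v := Iff.rfl

theorem mem_eStab {u v : V} {g : G} : g ∈ eStab ρ u v ↔ ρ g u = u ∧ ρ g v = v := Iff.rfl

def PreservesAdj.hom (h : PreservesAdj X ρ) (g : G) : X →g X :=
  ⟨ρ g, h g _ _⟩

@[simp] theorem PreservesAdj.coe_hom (h : PreservesAdj X ρ) (g : G) : ⇑(h.hom g) = ρ g := rfl

theorem PreservesAdj.dist_le (h : PreservesAdj X ρ) (g : G) {u v : V} (huv : X.Reachable u v) :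
    X.dist (ρ g u) (ρ g v) ≤ X.dist u v := by
  obtain ⟨p, hp⟩ := huv.exists_walk_length_eq_dist
  exact (X.dist_le (p.map (h.hom g))).trans_eq (by rw [Walk.length_map, hp])

theorem PreservesAdj.dist_apply (h : PreservesAdj X ρ) (hX : X.Connected) (g : G) (u v : V) :
    X.dist (ρ g u) (ρ g v) = X.dist u v := by
  refine le_antisymm (h.dist_le g (hX u v)) ?_
  simpa using h.dist_le g⁻¹ (hX (ρ g u) (ρ g v))

theorem NoInversions.apply_eq_of_sym2_eq (h : NoInversions X ρ) {g : G} {u v : V}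
    (huv : X.Adj u v) (hg : s(ρ g u, ρ g v) = s(u, v)) : ρ g u = u ∧ ρ g v = v := by
  rcases Sym2.eq_iff.mp hg with hfix | ⟨hu, hv⟩
  · exact hfix
  · exact absurd ⟨hu, hv⟩ (h g u v huv)

theorem PreservesAdj.apply_eq_of_mem_support (pa : PreservesAdj X ρ) (hX : X.IsTree) {g : G}
    {u v : V} (hu : ρ g u = u) (hv : ρ g v = v) {p : X.Walk u v} (hp : p.IsPath) :
    ∀ w ∈ p.support, ρ g w = w := by
  have hunique : ∀ {u' v' : V} (q : X.Walk u' v'), q.IsPath → u' = u → v' = v →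
      q.support = p.support := by
    rintro _ _ q hq rfl rfl
    rw [(hX.existsUnique_path _ _).unique hq hp]
  have hsupp := hunique _ (hp.map (f := pa.hom g) (ρ g).injective) hu hv
  rw [Walk.support_map, PreservesAdj.coe_hom] at hsupp
  exact List.map_inj_left.mp (hsupp.trans (List.map_id' _).symm)

theorem PreservesAdj.apply_eq_of_walk_not_mem_edges (pa : PreservesAdj X ρ) (hX : X.IsTree)
    {u v w : V} (huv : X.Adj u v) (p : X.Walk u w) (hp : s(u, v) ∉ p.edges) {g : G}
    (hw : ρ g w = w) (hv : ρ g v = v) : ρ g u = u := by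
  obtain ⟨r, hr⟩ := (hX.existsUnique_path w v).exists
  have hedge := hX.isAcyclic.mem_edges_of_adj huv (p.append r)
  rw [Walk.edges_append, List.mem_append, or_iff_right hp] at hedge
  exact pa.apply_eq_of_mem_support hX hw hv hr u (r.fst_mem_support_of_mem_edges hedge)

end Action

namespace IsGTree

variable {G V : Type} [Group G] {X : SimpleGraph V} {ρ : G →* Equiv.Perm V}

theorem dist_apply_of_min_displacement (hX : IsGTree X ρ) {γ : G} {u v : V}
    (hmin : ∀ w, X.dist v (ρ γ v) ≤ X.dist w (ρ γ w)) (hvu : X.Adj v u)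
    (hu : X.dist u (ρ γ v) + 1 = X.dist v (ρ γ v)) :
    X.dist (ρ γ u) v = X.dist (ρ γ u) u + 1 ∧ X.dist u (ρ γ u) = X.dist v (ρ γ v) := by
  obtain ⟨hT, pa, ni⟩ := hX
  have hγuv : X.Adj (ρ γ u) (ρ γ v) := pa γ u v hvu.symm
  rcases hT.dist_eq_dist_add_one_of_adj (ρ γ u) hvu with hside | hside
  · have h1 : X.dist (ρ γ u) v = X.dist v (ρ γ u) := dist_comm
    have h2 : X.dist (ρ γ u) u = X.dist u (ρ γ u) := dist_comm
    have := hmin u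
    refine ⟨hside, ?_⟩
    rcases hT.dist_eq_dist_add_one_of_adj v hγuv with h | h <;> omega
  · -- `v` and `γ v` lie on opposite sides of the edge `v u`, which `γ` then inverts
    have hsep := hT.dist_eq_of_adj_of_sides hvu hside
      (z := ρ γ v) (by rw [dist_comm, ← hu, dist_comm])
    rw [pa.dist_apply hT.connected, dist_eq_one_iff_adj.mpr hvu.symm] at hsep
    have hγu : ρ γ u = v := (hT.connected.dist_eq_zero_iff).mp (by omega)
    have hγv : ρ γ v = u := ((hT.connected.dist_eq_zero_iff).mp (by omega)).symm
    exact absurd ⟨hγv, hγu⟩ (ni γ v u hvu)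

theorem dist_pow_apply_of_min_displacement (hX : IsGTree X ρ) {γ : G} {u v : V}
    (hmin : ∀ w, X.dist v (ρ γ v) ≤ X.dist w (ρ γ w)) (hvu : X.Adj v u)
    (hu : X.dist u (ρ γ v) + 1 = X.dist v (ρ γ v)) (k : ℕ) :
    X.dist v (ρ (γ ^ k) v) = k * X.dist v (ρ γ v) ∧
      X.dist v (ρ (γ ^ k) u) = k * X.dist v (ρ γ v) + 1 := by
  obtain ⟨hside, hdisp⟩ := hX.dist_apply_of_min_displacement hmin hvu hu
  have hT := hX.1
  have hiso := hX.2.1.dist_apply hT.connected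
  induction k with
  | zero => simpa using dist_eq_one_iff_adj.mpr hvu
  | succ k ih =>
    have hsucc : ∀ w, ρ (γ ^ (k + 1)) w = ρ (γ ^ k) (ρ γ w) := by
      intro w; rw [pow_succ, map_mul, Equiv.Perm.mul_apply]
    have hadj : X.Adj (ρ (γ ^ k) v) (ρ (γ ^ k) u) := hX.2.1 _ _ _ hvu
    have hv := hT.dist_eq_of_adj_of_sides hadj (w := v) (z := ρ (γ ^ (k + 1)) v)
      (by omega) (by rw [hsucc, hiso, hiso, dist_comm, ← hu, dist_comm])
    have hu' := hT.dist_eq_of_adj_of_sides hadj (w := v) (z := ρ (γ ^ (k + 1)) u)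
      (by omega) (by rw [hsucc, hiso, hiso, hside])
    rw [hsucc, hiso] at hv hu'
    rw [hsucc, hsucc, hv, hu', ih.1, hdisp, ← hu]
    constructor <;> ring

/-- If `γ` fixed no vertex, its minimal displacement `D` would be positive and `γ ^ k` would move
a vertex of minimal displacement by `k * D`, unboundedly, whereas `γ ^ (n * k)` fixes `x`. -/
theorem elliptic_of_elliptic_pow (hX : IsGTree X ρ) {γ : G} {n : ℕ} (hn : n ≠ 0)
    (h : Elliptic ρ (γ ^ n)) : Elliptic ρ γ := by
  by_contra hγ
  obtain ⟨x, hx⟩ := h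
  have hT := hX.1
  have : Nonempty V := ⟨x⟩
  let displacement (w : V) : ℕ := X.dist w (ρ γ w)
  obtain ⟨v, hmin⟩ : ∃ v, ∀ w, displacement v ≤ displacement w :=
    ⟨Function.argmin displacement, fun w => Function.argmin_le displacement w⟩
  obtain ⟨u, hvu, hu⟩ :=
    hT.connected.exists_adj_dist_add_one_eq (fun h => hγ ⟨v, h.symm⟩)
  set k := 2 * X.dist v x + 1
  have hfix : ρ (γ ^ (n * k)) x = x := by
    rw [pow_mul]
    exact (Subgroup.pow_mem (vStab ρ x) (mem_vStab.mpr hx) k)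
  have hdisp := (hX.dist_pow_apply_of_min_displacement hmin hvu hu (n * k)).1
  have hle : X.dist v (ρ (γ ^ (n * k)) v) ≤ 2 * X.dist v x := by
    calc X.dist v (ρ (γ ^ (n * k)) v)
        ≤ X.dist v x + X.dist (ρ (γ ^ (n * k)) x) (ρ (γ ^ (n * k)) v) := by
          rw [hfix]; exact hT.connected.dist_triangle
      _ = 2 * X.dist v x := by rw [hX.2.1.dist_apply hT.connected, SimpleGraph.dist_comm]; ring
  have hgrowth : k ≤ n * k * X.dist v (ρ γ v) := by
    rw [mul_right_comm]
    exact Nat.le_mul_of_pos_left k (Nat.mul_pos (Nat.pos_of_ne_zero hn) (by omega))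
  omega

theorem elliptic_of_elliptic_zpow (hX : IsGTree X ρ) {γ : G} {n : ℤ} (hn : n ≠ 0)
    (h : Elliptic ρ (γ ^ n)) : Elliptic ρ γ := by
  refine hX.elliptic_of_elliptic_pow (Int.natAbs_ne_zero.mpr hn) ?_
  obtain ⟨x, hx⟩ := h
  refine ⟨x, ?_⟩
  rcases Int.natAbs_eq n with hn' | hn' <;> rw [hn'] at hx
  · rwa [zpow_natCast] at hx
  · rw [zpow_neg, zpow_natCast, map_inv, Equiv.Perm.inv_eq_iff_eq] at hx
    exact hx.symm

theorem elliptic_of_le_zpowers (hX : IsGTree X ρ) {γ : G} {H : Subgroup G} (hH : H ≠ ⊥)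
    (hγ : H ≤ Subgroup.zpowers γ) {x : V} (hx : H ≤ vStab ρ x) : Elliptic ρ γ := by
  obtain ⟨c, hc, hc1⟩ := H.bot_or_exists_ne_one.resolve_left hH
  obtain ⟨n, rfl⟩ := Subgroup.mem_zpowers_iff.mp (hγ hc)
  have hn : n ≠ 0 := by rintro rfl; exact hc1 (zpow_zero γ)
  exact hX.elliptic_of_elliptic_zpow hn ⟨x, hx hc⟩

end IsGTree

section Splittings

variable {G V W W' : Type} [Group G]

theorem IsCollapseMap.eStab_le {X : SimpleGraph V} {ρ : G →* Equiv.Perm V} {a b : V}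
    {T : SimpleGraph W} {σ : G →* Equiv.Perm W} {q : V → W}
    (hq : IsCollapseMap X ρ a b T σ q) (hX : IsGTree X ρ) (hab : X.Adj a b) :
    eStab σ (q a) (q b) ≤ eStab ρ a b := by
  intro g hg
  obtain ⟨hqe, -, -, hqcomp, -⟩ := hq
  obtain ⟨hga, hgb⟩ := mem_eStab.mp hg
  obtain ⟨p₁, hp₁⟩ := (hqcomp (ρ g a) a).mp (by rw [hqe, hga])
  obtain ⟨p₂, hp₂⟩ := (hqcomp (ρ g b) b).mp (by rw [hqe, hgb])
  have horbit : s(a, b) ∈ EdgeOrbit ρ a b := ⟨1, by simp⟩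
  have hedge := hX.1.isAcyclic.mem_edges_of_adj hab
    (p₁.reverse.append (Walk.cons (hX.2.1 g a b hab) p₂))
  simp only [Walk.edges_append, Walk.edges_reverse, Walk.edges_cons, List.mem_append,
    List.mem_reverse, List.mem_cons] at hedge
  rcases hedge with h | h | h
  · exact absurd horbit (hp₁ _ h)
  · exact mem_eStab.mpr (hX.2.2.apply_eq_of_sym2_eq hab h.symm)
  · exact absurd horbit (hp₂ _ h)

theorem OneEdgeOrbit.exists_sym2_eq {T : SimpleGraph W} {σ : G →* Equiv.Perm W}
    (h : OneEdgeOrbit T σ) {x y c d : W} (hxy : T.Adj x y) (hcd : T.Adj c d) :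
    ∃ g : G, s(σ g x, σ g y) = s(c, d) := by
  obtain ⟨u, v, -, htrans⟩ := h
  have hmove : ∀ x y, T.Adj x y → ∃ g : G, s(σ g u, σ g v) = s(x, y) := fun x y h =>
    (htrans x y h).imp fun _ hg => Sym2.eq_iff.mpr hg
  obtain ⟨g₁, h₁⟩ := hmove x y hxy
  obtain ⟨g₂, h₂⟩ := hmove c d hcd
  refine ⟨g₂ * g₁⁻¹, ?_⟩
  rw [← h₂, ← Sym2.map_mk, ← h₁, Sym2.map_mk]
  simp

variable {T : SimpleGraph W} {σ : G →* Equiv.Perm W} {T' : SimpleGraph W'}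
  {σ' : G →* Equiv.Perm W'} {f : W' → W}

theorem mem_eStab_of_sym2_eq (hfe : ∀ (g : G) (x : W'), f (σ' g x) = σ g (f x))
    (niT : NoInversions T σ) {x y c d : W'} (hadj : T.Adj (f x) (f y)) {g : G}
    (hg : s(σ' g x, σ' g y) = s(c, d)) (hcd : s(f c, f d) = s(f x, f y)) :
    g ∈ eStab σ (f x) (f y) := by
  refine mem_eStab.mpr (niT.apply_eq_of_sym2_eq hadj ?_)
  rw [← hfe, ← hfe, ← Sym2.map_mk, hg, Sym2.map_mk, hcd]

theorem exists_mem_eStab_of_fold (horb : OneEdgeOrbit T' σ')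
    (hfe : ∀ (g : G) (x : W'), f (σ' g x) = σ g (f x)) (niT : NoInversions T σ)
    {x y y' : W'} (hadj : T.Adj (f x) (f y)) (hxy : T'.Adj x y) (hxy' : T'.Adj x y')
    (hfy : f y' = f y) : ∃ h ∈ eStab σ (f x) (f y), σ' h x = x ∧ σ' h y = y' := by
  obtain ⟨h, hh⟩ := horb.exists_sym2_eq hxy hxy'
  have hstab := mem_eStab_of_sym2_eq hfe niT hadj hh (by rw [hfy])
  refine ⟨h, hstab, ?_⟩
  rcases Sym2.eq_iff.mp hh with hfix | ⟨hx, -⟩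
  · exact hfix
  · refine absurd ?_ hadj.ne
    rw [← (mem_eStab.mp hstab).1, ← hfe, hx, hfy]

theorem not_mem_edges_map_of_commute (horb : OneEdgeOrbit T' σ')
    (hfe : ∀ (g : G) (x : W'), f (σ' g x) = σ g (f x)) (niT : NoInversions T σ)
    (hfadj : ∀ x y : W', T'.Adj x y → T.Adj (f x) (f y)) {x y : W'} (hxy : T'.Adj x y)
    {h : G} (hcomm : ∀ g ∈ eStab σ (f x) (f y), Commute g h) (hhy : σ' h y ≠ y)
    {u v : W'} (p : T'.Walk u v) (hp : ∀ w ∈ p.support, σ' h w = w) :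
    s(f x, f y) ∉ (p.map ⟨f, hfadj _ _⟩).edges := by
  rw [Walk.edges_map, List.mem_map]
  rintro ⟨⟨c, d⟩, hcd, hfcd⟩
  obtain ⟨g, hg⟩ := horb.exists_sym2_eq hxy (p.adj_of_mem_edges hcd)
  have hgh := hcomm g (mem_eStab_of_sym2_eq hfe niT (hfadj x y hxy) hg hfcd)
  have hgy : σ' h (σ' g y) = σ' g y := by
    rcases Sym2.eq_iff.mp hg with ⟨-, hgy⟩ | ⟨-, hgy⟩ <;> rw [hgy]
    exacts [hp d (p.snd_mem_support_of_mem_edges hcd), hp c (p.fst_mem_support_of_mem_edges hcd)]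
  apply hhy
  apply (σ' g).injective
  rw [← Equiv.Perm.mul_apply, ← map_mul, hgh.eq, map_mul, Equiv.Perm.mul_apply, hgy]

end Splittings

theorem gbs_fold_forces_equal_stabilizer_general {G V W W' : Type} [Group G]
    (X : SimpleGraph V) (ρ : G →* Equiv.Perm V) (hX : IsGBSTree X ρ)
    (a b : V) (hab : X.Adj a b)
    (T : SimpleGraph W) (σ : G →* Equiv.Perm W) (q : V → W)
    (hT : IsGTree T σ) (hq : IsCollapseMap X ρ a b T σ q)
    (T' : SimpleGraph W') (σ' : G →* Equiv.Perm W') (f : W' → W)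
    (hT' : IsGTree T' σ') (horb : OneEdgeOrbit T' σ')
    (hf : NontrivialFoldOnto T' σ' T σ f)
    (x y : W') (hxy : T'.Adj x y) (hfx : f x = q a) (hfy : f y = q b)
    (hfold : ∃ y'' : W', T'.Adj x y'' ∧ y'' ≠ y ∧ f y'' = f y)
    (hstab : eStab σ' x y < eStab ρ a b ∧ eStab σ' x y ≠ ⊥) :
    eStab ρ a b = vStab ρ b := by
  obtain ⟨hXG, hvcyc, -⟩ := hX
  obtain ⟨hfe, -, hfadj, -⟩ := hf
  obtain ⟨y'', hxy'', hy''ne, hfy''⟩ := hfold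
  have hadj : T.Adj (f x) (f y) := hfadj x y hxy
  have hGe : eStab σ (f x) (f y) ≤ eStab ρ a b := hfx ▸ hfy ▸ hq.eStab_le hXG hab
  obtain ⟨γ, hγ⟩ := (Subgroup.isCyclic_iff_exists_zpowers_eq_top _).mp (hvcyc b).1
  have hγy : σ γ (f y) = f y := by
    rw [hfy, ← hq.1, mem_vStab.mp (hγ ▸ Subgroup.mem_zpowers γ : γ ∈ vStab ρ b)]
  suffices hγx : σ γ (f x) = f x by
    refine le_antisymm inf_le_right ?_
    rw [← hγ, Subgroup.zpowers_le]
    exact hGe (mem_eStab.mpr ⟨hγx, hγy⟩)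
  have hpow : ∀ g ∈ eStab σ (f x) (f y), ∃ k : ℤ, γ ^ k = g := fun g hg =>
    Subgroup.mem_zpowers_iff.mp (hγ ▸ (hGe hg).2)
  obtain ⟨h, hh, hhx, hhy⟩ := exists_mem_eStab_of_fold horb hfe hT.2.2 hadj hxy hxy'' hfy''
  obtain ⟨k, rfl⟩ := hpow h hh
  obtain ⟨z, hz⟩ := hT'.elliptic_of_le_zpowers hstab.2 (hγ ▸ hstab.1.le.trans inf_le_right)
    inf_le_left
  obtain ⟨P, hP⟩ := (hT'.1.existsUnique_path x z).exists
  have hPfix := hT'.2.1.apply_eq_of_mem_support hT'.1 hhx (Subgroup.zpow_mem (vStab σ' z) hz k) hP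
  have hcross := not_mem_edges_map_of_commute horb hfe hT.2.2 hfadj hxy
    (fun g hg => by obtain ⟨j, rfl⟩ := hpow g hg; exact Commute.zpow_zpow_self γ j k)
    (hhy ▸ hy''ne) P hPfix
  exact hT.2.1.apply_eq_of_walk_not_mem_edges hT.1 hadj _ hcross (by simp [← hfe, hz]) hγy

/-- Let `X` be a cocompact generalized Baumslag–Solitar tree,
`{a, b}` an edge, and `X̂` (here `T`) the one-edge splitting obtained by
collapsing the components of `X − G⬝{a,b}`.  If `X̂` admits a nontrivial fold
`f : Y → X̂` at the image of `a`, where the edge `{x, y}` of `Y` mapping to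
`{q a, q b}` has stabilizer a proper nontrivial subgroup of `G_e = eStab ρ a b`,
then `G_e` equals the stabilizer of the endpoint `b`. -/
theorem gbs_fold_forces_equal_stabilizer {G V W W' : Type} [Group G]
    (X : SimpleGraph V) (ρ : G →* Equiv.Perm V) (hX : IsGBSTree X ρ)
    (hcocpt : Finite (Quot fun x y : V => ∃ g : G, ρ g x = y))
    (a b : V) (hab : X.Adj a b)
    (T : SimpleGraph W) (σ : G →* Equiv.Perm W) (q : V → W)
    (hT : IsGTree T σ) (hq : IsCollapseMap X ρ a b T σ q)
    (T' : SimpleGraph W') (σ' : G →* Equiv.Perm W') (f : W' → W)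
    (hT' : IsGTree T' σ') (horb : OneEdgeOrbit T' σ')
    (hf : NontrivialFoldOnto T' σ' T σ f)
    (x y : W') (hxy : T'.Adj x y) (hfx : f x = q a) (hfy : f y = q b)
    (hfold : ∃ y'' : W', T'.Adj x y'' ∧ y'' ≠ y ∧ f y'' = f y)
    (hstab : eStab σ' x y < eStab ρ a b ∧ eStab σ' x y ≠ ⊥) :
    eStab ρ a b = vStab ρ b :=
  gbs_fold_forces_equal_stabilizer_general X ρ hX a b hab T σ q hT hq T' σ' f hT' horb hf x y hxy
    hfx hfy hfold hstab
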